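/- In ℚ^10, let U_1 be the span of the all-ones vector 𝟙 = (1,...,1); let U_4 be the span of v_2 - v_1, v_3 - v_1, v_4 - v_1, v_5 - v_1, where v_1 = (1,0,0,0,1,1,0,0,1,0), v_2 = (1,1,0,0,0,0,1,0,0,1), v_3 = (0,1,1,0,0,1,0,1,0,0), v_4 = (0,0,1,1,0,0,1,0,1,0), v_5 = (0,0,0,1,1,0,0,1,0,1); and let U_5 be the span of w_1 = (1,-1,1,-1,1,-1,1,1,-1,-1), w_2 = (1,1,-1,1,-1,-1,-1,1,1,-1), w_3 = (-1,1,1,-1,1,-1,-1,-1,1,1), w_4 = (1,-1,1,1,-1,1,-1,-1,-1,1), w_5 = (-1,1,-1,1,1,1,1,-1,-1,-1), w_6 = (-1,-1,-1,-1,-1,1,1,1,1,1). Then U_1, U_4, U_5 have dimensions 1, 4, 5 respectively, are pairwise orthogonal with respect to the standard bilinear form on ℚ^10, each is invariant under the coordinate-permutation action of each of α = (1 5)(2 8)(4 7), σ = (2 5 7 6 10 9)(3 8 4), and φ = (1 2 3 4 5)(6 7 8 9 10), and ℚ^10 is the internal direct sum U_1 ⊕ U_4 ⊕ U_5. In particular,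 the orthogonal complement of 𝟙 equals U_4 ⊕ U_5 and is a reducible invariant subspace of this permutation representation. -/

import Mathlib

/-- The fan vectors `v_1, …, v_5` in `ℚ^10`. -/
def fanVec : Fin 5 → (Fin 10 → ℚ)
  | 0 => ![1, 0, 0, 0, 1, 1, 0, 0, 1, 0]
  | 1 => ![1, 1, 0, 0, 0, 0, 1, 0, 0, 1]
  | 2 => ![0, 1, 1, 0, 0, 1, 0, 1, 0, 0]
  | 3 => ![0, 0, 1, 1, 0, 0, 1, 0, 1, 0]
  | 4 => ![0, 0, 0, 1, 1, 0, 0, 1, 0, 1]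

/-- The Hamiltonian-cycle vectors `w_1, …, w_6` in `ℚ^10`. -/
def hamVec : Fin 6 → (Fin 10 → ℚ)
  | 0 => ![1, -1, 1, -1, 1, -1, 1, 1, -1, -1]
  | 1 => ![1, 1, -1, 1, -1, -1, -1, 1, 1, -1]
  | 2 => ![-1, 1, 1, -1, 1, -1, -1, -1, 1, 1]
  | 3 => ![1, -1, 1, 1, -1, 1, -1, -1, -1, 1]
  | 4 => ![-1, 1, -1, 1, 1, 1, 1, -1, -1, -1]
  | 5 => ![-1, -1, -1, -1, -1, 1, 1, 1, 1, 1]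

/-- `U_1`: the span of the all-ones vector. -/
def U1 : Submodule ℚ (Fin 10 → ℚ) := Submodule.span ℚ {fun _ => (1 : ℚ)}

/-- `U_4`: the span of `v_2 - v_1, v_3 - v_1, v_4 - v_1, v_5 - v_1`. -/
def U4 : Submodule ℚ (Fin 10 → ℚ) :=
  Submodule.span ℚ {fanVec 1 - fanVec 0, fanVec 2 - fanVec 0,
    fanVec 3 - fanVec 0, fanVec 4 - fanVec 0}

/-- `U_5`: the span of the Hamiltonian-cycle vectors. -/
def U5 : Submodule ℚ (Fin 10 → ℚ) := Submodule.span ℚ (Set.range hamVec)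

/-- The permutation `α = (1 5)(2 8)(4 7)` of `{1,…,10}`, on `Fin 10`
(symbol `i` corresponds to index `i-1`). -/
def permAlpha : Equiv.Perm (Fin 10) := Equiv.swap 0 4 * Equiv.swap 1 7 * Equiv.swap 3 6

/-- The permutation `σ = (2 5 7 6 10 9)(3 8 4)` of `{1,…,10}`, on `Fin 10`. -/
def permSigma : Equiv.Perm (Fin 10) :=
  List.formPerm [(1 : Fin 10), 4, 6, 5, 9, 8] * List.formPerm [(2 : Fin 10), 7, 3]

/-- The permutation `φ = (1 2 3 4 5)(6 7 8 9 10)` of `{1,…,10}`, on `Fin 10`. -/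
def permPhi : Equiv.Perm (Fin 10) :=
  List.formPerm [(0 : Fin 10), 1, 2, 3, 4] * List.formPerm [(5 : Fin 10), 6, 7, 8, 9]

/-!
All three subspaces are spanned by explicit vectors, so orthogonality and invariance are
finite checks on generators: each of `α, σ, φ` permutes the fan vectors `v_a` and permutes the
vectors `w_j` up to sign. The four generators of `U_4` and `w_1, …, w_5` are linearly
independent, while `w_1 + ⋯ + w_6 = 0`. The standard form on `ℚ^10` is anisotropic, so
pairwise orthogonal subspaces are independent, and `1 + 4 + 5 = 10` forces
`U_1 ⊕ U_4 ⊕ U_5 = ℚ^10`; the orthogonal complement of `𝟙` is then `U_4 ⊕ U_5`.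
-/

open Matrix Module Submodule

theorem Submodule.finrank_sup_of_disjoint {K V : Type*} [DivisionRing K] [AddCommGroup V]
    [Module K V] {A B : Submodule K V} [FiniteDimensional K A] [FiniteDimensional K B]
    (h : Disjoint A B) : finrank K ↥(A ⊔ B) = finrank K A + finrank K B := by
  rw [← finrank_sup_add_finrank_inf_eq, h.eq_bot, finrank_bot, add_zero]

theorem Submodule.span_range_le_comap_of_forall_eq_or_eq_neg {R M κ : Type*} [Ring R]
    [AddCommGroup M] [Module R M] {v : κ → M} (f : M →ₗ[R] M)
    (hf : ∀ j, ∃ k, f (v j) = v k ∨ f (v j) = -v k) :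
    span R (Set.range v) ≤ (span R (Set.range v)).comap f := by
  refine span_le.2 ?_
  rintro _ ⟨j, rfl⟩
  obtain ⟨k, hk | hk⟩ := hf j
  · rw [SetLike.mem_coe, mem_comap, hk]
    exact subset_span ⟨k, rfl⟩
  · rw [SetLike.mem_coe, mem_comap, hk]
    exact neg_mem (subset_span ⟨k, rfl⟩)

section DotOrthogonal

variable {K ι : Type*} [Fintype ι]

section CommSemiring

variable [CommSemiring K]

def DotOrthogonal (A B : Submodule K (ι → K)) : Prop :=
  ∀ x ∈ A, ∀ y ∈ B, x ⬝ᵥ y = 0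

variable {A B C : Submodule K (ι → K)}

theorem DotOrthogonal.of_span {s t : Set (ι → K)} (h : ∀ x ∈ s, ∀ y ∈ t, x ⬝ᵥ y = 0) :
    DotOrthogonal (span K s) (span K t) := by
  have : span K t ≤ (span K s).orthogonalBilin (dotProductBilin K K) :=
    span_le.2 fun y hy => (span_le (p := LinearMap.ker ((dotProductBilin K K).flip y))).2
      fun x hx => h x hx y hy
  exact fun x hx y hy => this hy x hx

theorem DotOrthogonal.symm (h : DotOrthogonal A B) : DotOrthogonal B A :=
  fun y hy x hx => dotProduct_comm y x ▸ h x hx y hy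

theorem DotOrthogonal.sup_right (hB : DotOrthogonal A B) (hC : DotOrthogonal A C) :
    DotOrthogonal A (B ⊔ C) := by
  have : B ⊔ C ≤ A.orthogonalBilin (dotProductBilin K K) :=
    sup_le (fun y hy x hx => hB x hx y hy) (fun y hy x hx => hC x hx y hy)
  exact fun x hx y hy => this hy x hx

end CommSemiring

section OrderedField

variable [Field K] [LinearOrder K] [IsStrictOrderedRing K] {A B : Submodule K (ι → K)}

theorem DotOrthogonal.disjoint (h : DotOrthogonal A B) : Disjoint A B :=
  disjoint_def.2 fun x hxA hxB => dotProduct_self_eq_zero.1 (h x hxA x hxB)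

theorem DotOrthogonal.mem_iff_of_sup_eq_top (h : DotOrthogonal A B) (hAB : A ⊔ B = ⊤)
    (x : ι → K) : x ∈ B ↔ ∀ a ∈ A, a ⬝ᵥ x = 0 := by
  refine ⟨fun hx a ha => h a ha x hx, fun hx => ?_⟩
  obtain ⟨a, ha, b, hb, rfl⟩ := mem_sup.1 (hAB ▸ mem_top : x ∈ A ⊔ B)
  have haa : a ⬝ᵥ a = 0 := by simpa [dotProduct_add, h a ha b hb] using hx a ha
  rwa [dotProduct_self_eq_zero.1 haa, zero_add]

end OrderedField

end DotOrthogonal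

def fanDiff (a : Fin 4) : Fin 10 → ℚ := fanVec a.succ - fanVec 0

theorem U4_eq_span_range_fanDiff : U4 = span ℚ (Set.range fanDiff) := by
  rw [U4]
  congr 1
  ext x
  simp [fanDiff, Fin.exists_fin_succ, eq_comm]

theorem fanVec_sub_mem_U4 (a b : Fin 5) : fanVec a - fanVec b ∈ U4 := by
  have base : ∀ a, fanVec a - fanVec 0 ∈ U4 :=
    Fin.cases (by simp) fun a => U4_eq_span_range_fanDiff ▸ subset_span ⟨a, rfl⟩
  simpa using sub_mem (base a) (base b)

theorem sum_hamVec : ∑ j, hamVec j = 0 := by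
  ext i
  fin_cases i <;> simp [Fin.sum_univ_succ, hamVec]

theorem U5_eq_span_range_castSucc : U5 = span ℚ (Set.range (hamVec ∘ Fin.castSucc)) := by
  refine le_antisymm (span_le.2 ?_) (span_mono (Set.range_comp_subset_range _ _))
  rintro _ ⟨j, rfl⟩
  induction j using Fin.lastCases with
  | last =>
    have : hamVec (Fin.last 5) = -∑ j : Fin 5, hamVec j.castSucc := by
      rw [eq_neg_iff_add_eq_zero, add_comm, ← Fin.sum_univ_castSucc, sum_hamVec]
    rw [SetLike.mem_coe, this]
    exact neg_mem (sum_mem fun j _ => subset_span ⟨j, rfl⟩)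
  | cast j => exact subset_span ⟨j, rfl⟩

theorem linearIndependent_fanDiff : LinearIndependent ℚ fanDiff := by
  refine Fintype.linearIndependent_iff.2 fun c hc => ?_
  have h := congrFun hc
  simp only [fanDiff, fanVec, sub_cons, sub_zero, empty_sub_empty, smul_cons, smul_eq_mul,
    smul_empty, Finset.sum_apply, Fin.sum_univ_succ, Fin.isValue, Fin.succ_zero_eq_one, head_cons,
    sub_self, mul_zero, tail_cons, mul_one, zero_sub, mul_neg, Fin.succ_one_eq_two, Fin.reduceSucc,
    Finset.univ_unique, Fin.default_eq_zero, Finset.sum_singleton, Pi.zero_apply,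
    Fin.forall_fin_succ, cons_val_zero, zero_add, cons_val_succ, add_zero, cons_val_fin_one,
    forall_const] at h
  intro i
  fin_cases i <;> simp only [Fin.zero_eta, Fin.mk_one, Fin.reduceFinMk] <;> linarith

theorem linearIndependent_hamVec_castSucc : LinearIndependent ℚ (hamVec ∘ Fin.castSucc) := by
  refine Fintype.linearIndependent_iff.2 fun c hc => ?_
  have h := congrFun hc
  simp only [Function.comp_apply, hamVec, Finset.sum_apply, Pi.smul_apply, smul_eq_mul,
    Fin.sum_univ_succ, Fin.isValue, Fin.castSucc_zero, Fin.castSucc_succ, Nat.reduceAdd,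
    Fin.succ_zero_eq_one, Fin.succ_one_eq_two, Fin.reduceSucc, Finset.univ_unique,
    Fin.default_eq_zero, Finset.sum_singleton, Pi.zero_apply, Fin.forall_fin_succ, cons_val_zero,
    mul_one, mul_neg, cons_val_succ, cons_val_fin_one, forall_const] at h
  intro i
  fin_cases i <;> simp only [Fin.zero_eta, Fin.mk_one, Fin.reduceFinMk] <;> linarith

theorem finrank_U1 : finrank ℚ U1 = 1 :=
  finrank_span_singleton (Function.ne_iff.2 ⟨0, one_ne_zero⟩)

theorem finrank_U4 : finrank ℚ U4 = 4 := by
  rw [U4_eq_span_range_fanDiff, finrank_span_eq_card linearIndependent_fanDiff,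
    Fintype.card_fin]

theorem finrank_U5 : finrank ℚ U5 = 5 := by
  rw [U5_eq_span_range_castSucc, finrank_span_eq_card linearIndependent_hamVec_castSucc,
    Fintype.card_fin]

theorem dotOrthogonal_U1_U4 : DotOrthogonal U1 U4 := by
  rw [U4_eq_span_range_fanDiff]
  refine .of_span ?_
  rintro _ rfl _ ⟨a, rfl⟩
  fin_cases a <;> simp [dotProduct, Fin.sum_univ_succ, fanDiff, fanVec]

theorem dotOrthogonal_U1_U5 : DotOrthogonal U1 U5 := by
  refine .of_span ?_
  rintro _ rfl _ ⟨j, rfl⟩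
  fin_cases j <;> simp [dotProduct, Fin.sum_univ_succ, hamVec]

theorem dotOrthogonal_U4_U5 : DotOrthogonal U4 U5 := by
  rw [U4_eq_span_range_fanDiff]
  refine .of_span ?_
  rintro _ ⟨a, rfl⟩ _ ⟨j, rfl⟩
  fin_cases a <;> fin_cases j <;>
    simp [dotProduct, Fin.sum_univ_succ, fanDiff, fanVec, hamVec]

theorem U1_sup_U4_sup_U5 : U1 ⊔ (U4 ⊔ U5) = ⊤ := by
  refine eq_top_of_disjoint _ _ ?_
    (dotOrthogonal_U1_U4.sup_right dotOrthogonal_U1_U5).disjoint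
  rw [finrank_sup_of_disjoint dotOrthogonal_U4_U5.disjoint, finrank_U1, finrank_U4, finrank_U5,
    finrank_fin_fun]

theorem forall_mem_U1_dotProduct_eq_zero_iff (x : Fin 10 → ℚ) :
    (∀ a ∈ U1, a ⬝ᵥ x = 0) ↔ ∑ k, x k = 0 := by
  refine ⟨fun h => by simpa [dotProduct] using h _ (mem_span_singleton_self _),
    fun hx a ha => ?_⟩
  obtain ⟨c, rfl⟩ := mem_span_singleton.1 ha
  simp [dotProduct, ← Finset.mul_sum, hx]

theorem U1_le_comap_funLeft (g : Fin 10 → Fin 10) : U1 ≤ U1.comap (LinearMap.funLeft ℚ ℚ g) :=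
  span_le.2 <| by rintro _ rfl; exact subset_span rfl

theorem U4_le_comap {f : (Fin 10 → ℚ) →ₗ[ℚ] (Fin 10 → ℚ)}
    (hf : ∀ a, ∃ b, f (fanVec a) = fanVec b) : U4 ≤ U4.comap f := by
  refine U4_eq_span_range_fanDiff.le.trans (span_le.2 ?_)
  rintro _ ⟨a, rfl⟩
  obtain ⟨b, hb⟩ := hf a.succ
  obtain ⟨b₀, hb₀⟩ := hf 0
  simpa [fanDiff, hb, hb₀] using fanVec_sub_mem_U4 b b₀

theorem perm_invariant_of_permutes_fanVec_hamVec (g : Equiv.Perm (Fin 10))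
    (hfan : ∀ a, ∃ b, fanVec a ∘ ⇑g⁻¹ = fanVec b)
    (hham : ∀ j, ∃ k, hamVec j ∘ ⇑g⁻¹ = hamVec k ∨ hamVec j ∘ ⇑g⁻¹ = -hamVec k) :
    ∀ U ∈ ({U1, U4, U5} : Set (Submodule ℚ (Fin 10 → ℚ))),
      ∀ x ∈ U, (fun i => x (g⁻¹ i)) ∈ U := by
  rintro U (rfl | rfl | rfl) x hx
  · exact U1_le_comap_funLeft ⇑g⁻¹ hx
  · exact U4_le_comap (f := LinearMap.funLeft ℚ ℚ ⇑g⁻¹) hfan hx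
  · exact span_range_le_comap_of_forall_eq_or_eq_neg (LinearMap.funLeft ℚ ℚ ⇑g⁻¹) hham hx

/-- `U_1, U_4, U_5` have dimensions `1, 4, 5`, are pairwise orthogonal for the standard
bilinear form `⟨x,y⟩ = Σ_k x_k y_k`, each is invariant under the coordinate-permutation
action `(g • x) i = x (g⁻¹ i)` of each of `α, σ, φ`, and `ℚ^10` is the internal direct
sum `U_1 ⊕ U_4 ⊕ U_5`. In particular the orthogonal complement of the all-ones vector,
`{x : Σ_k x_k = 0}`, equals `U_4 ⊔ U_5` (a reducible invariant subspace). -/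
theorem stmt13 :
    Module.finrank ℚ U1 = 1 ∧ Module.finrank ℚ U4 = 4 ∧ Module.finrank ℚ U5 = 5 ∧
    (∀ x ∈ U1, ∀ y ∈ U4, (∑ k : Fin 10, x k * y k) = 0) ∧
    (∀ x ∈ U1, ∀ y ∈ U5, (∑ k : Fin 10, x k * y k) = 0) ∧
    (∀ x ∈ U4, ∀ y ∈ U5, (∑ k : Fin 10, x k * y k) = 0) ∧
    (∀ g ∈ ({permAlpha, permSigma, permPhi} : Set (Equiv.Perm (Fin 10))),
      ∀ U ∈ ({U1, U4, U5} : Set (Submodule ℚ (Fin 10 → ℚ))),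
        ∀ x ∈ U, (fun i => x (g⁻¹ i)) ∈ U) ∧
    DirectSum.IsInternal ![U1, U4, U5] ∧
    (∀ x : Fin 10 → ℚ, (∑ k : Fin 10, x k) = 0 ↔ x ∈ U4 ⊔ U5) := by
  have h14 := dotOrthogonal_U1_U4
  have h15 := dotOrthogonal_U1_U5
  have h45 := dotOrthogonal_U4_U5
  refine ⟨finrank_U1, finrank_U4, finrank_U5, h14, h15, h45, ?_, ?_, fun x => ?_⟩
  · rintro g (rfl | rfl | rfl) <;>
      exact perm_invariant_of_permutes_fanVec_hamVec _ (by decide) (by decide)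
  · rw [DirectSum.isInternal_submodule_iff_iSupIndep_and_iSup_eq_top, iSupIndep_fin_three,
      iSup_fin_three]
    refine ⟨⟨(h14.sup_right h15).disjoint, (h45.sup_right h14.symm).disjoint,
      (h15.symm.sup_right h45.symm).disjoint⟩, ?_⟩
    simpa [sup_assoc] using U1_sup_U4_sup_U5
  · rw [(h14.sup_right h15).mem_iff_of_sup_eq_top U1_sup_U4_sup_U5,
      forall_mem_U1_dotProduct_eq_zero_iff]
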